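/- arXiv:1906.06907 — 2 statements merged into one kernel-verified Lean document; each statement's English description precedes it below -/
import Mathlib

section
/- Let X₁, …, Xₙ be independent real-valued random variables with E[Xⱼ] = 0, finite forward deviations σ_f(Xⱼ) and finite backward deviations σ_b(Xⱼ). Let a ∈ ℝⁿ, define uⱼ := max(aⱼ·σ_f(Xⱼ), −aⱼ·σ_b(Xⱼ)) ≥ 0, and assume ‖u‖₂ > 0. Then for every Ω > 0, Pr( Σⱼ aⱼ Xⱼ > Ω · ‖u‖₂ ) ≤ exp(−Ω²/2). -/
/-!
Chernoff's method. The definition of the forward deviation says exactly that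
`log E[exp(tZ)] ≤ t² σ_f(Z)² / 2` for `t > 0`. Applied to `Z = Xⱼ` when `aⱼ ≥ 0` and to `Z = −Xⱼ`
when `aⱼ < 0`, it gives `E[exp(t aⱼ Xⱼ)] ≤ exp(t² uⱼ² / 2)` for all `t ≥ 0`; by independence
`E[exp(t Σⱼ aⱼ Xⱼ)] ≤ exp(t² ‖u‖₂² / 2)`, and Markov's inequality at `t = Ω / ‖u‖₂` gives
`exp(−Ω² / 2)`.
-/

open MeasureTheory ProbabilityTheory

/-- The set of candidate values whose supremum is the forward deviation
`σ_f(X) = sup_{θ>0} √(2 θ⁻² log E[exp(θX)])`. -/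
def fwdDevSet {Ω : Type*} [MeasurableSpace Ω] (μ : Measure Ω) (X : Ω → ℝ) : Set ℝ :=
  {s : ℝ | ∃ θ : ℝ, 0 < θ ∧
    s = Real.sqrt (2 * θ⁻¹ ^ 2 * Real.log (∫ ω, Real.exp (θ * X ω) ∂μ))}

/-- The forward deviation of a random variable `X`:
`σ_f(X) = sup_{θ>0} √(2 θ⁻² log E[exp(θX)])`.  The backward deviation is `σ_b(X) = σ_f(−X)`. -/
noncomputable def fwdDev {Ω : Type*} [MeasurableSpace Ω] (μ : Measure Ω) (X : Ω → ℝ) : ℝ :=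
  sSup (fwdDevSet μ X)

open Real

/-- One-sided `HasSubgaussianMGF`: the bound is required only for `t ≥ 0`, which is all the
right tail needs, and all that the forward deviation alone can give. -/
def HasUpperSubgaussianMGF {Ω : Type*} [MeasurableSpace Ω] (Y : Ω → ℝ) (c : ℝ) (μ : Measure Ω) :
    Prop :=
  ∀ t, 0 ≤ t → Integrable (fun ω => exp (t * Y ω)) μ ∧ mgf Y μ t ≤ exp (c * t ^ 2 / 2)

section
variable {Ω : Type*} [MeasurableSpace Ω] {μ : Measure Ω}

namespace HasUpperSubgaussianMGF

lemma measureReal_ge_le [IsFiniteMeasure μ] {Y : Ω → ℝ} {c ε : ℝ}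
    (h : HasUpperSubgaussianMGF Y c μ) (hc : 0 < c) (hε : 0 ≤ ε) :
    μ.real {ω | ε ≤ Y ω} ≤ exp (-ε ^ 2 / (2 * c)) := by
  obtain ⟨hint, hmgf⟩ := h (ε / c) (div_nonneg hε hc.le)
  calc μ.real {ω | ε ≤ Y ω} ≤ exp (-(ε / c) * ε) * mgf Y μ (ε / c) :=
        measure_ge_le_exp_mul_mgf ε (div_nonneg hε hc.le) hint
    _ ≤ exp (-(ε / c) * ε) * exp (c * (ε / c) ^ 2 / 2) := by gcongr
    _ = exp (-ε ^ 2 / (2 * c)) := by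
        rw [← exp_add]
        congr 1
        field_simp
        ring

lemma sum_of_iIndepFun [IsFiniteMeasure μ] {ι : Type*} {Y : ι → Ω → ℝ} {c : ι → ℝ}
    (hindep : iIndepFun Y μ) (hmeas : ∀ i, Measurable (Y i)) {s : Finset ι}
    (h : ∀ i ∈ s, HasUpperSubgaussianMGF (Y i) (c i) μ) :
    HasUpperSubgaussianMGF (∑ i ∈ s, Y i) (∑ i ∈ s, c i) μ := by
  intro t ht
  refine ⟨hindep.integrable_exp_mul_sum hmeas fun i hi => (h i hi t ht).1, ?_⟩
  calc mgf (∑ i ∈ s, Y i) μ t = ∏ i ∈ s, mgf (Y i) μ t := hindep.mgf_sum hmeas s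
    _ ≤ ∏ i ∈ s, exp (c i * t ^ 2 / 2) :=
        Finset.prod_le_prod (fun _ _ => mgf_nonneg) fun i hi => (h i hi t ht).2
    _ = exp ((∑ i ∈ s, c i) * t ^ 2 / 2) := by
        rw [← exp_sum, Finset.sum_mul, Finset.sum_div]

end HasUpperSubgaussianMGF

variable {X : Ω → ℝ}

lemma fwdDev_nonneg (hb : BddAbove (fwdDevSet μ X)) : 0 ≤ fwdDev μ X :=
  (sqrt_nonneg _).trans (le_csSup hb ⟨1, one_pos, rfl⟩)

lemma mgf_le_exp_fwdDev (hb : BddAbove (fwdDevSet μ X)) {t : ℝ} (ht : 0 < t) :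
    mgf X μ t ≤ exp (fwdDev μ X ^ 2 * t ^ 2 / 2) := by
  have hsqrt : √(2 * t⁻¹ ^ 2 * log (mgf X μ t)) ≤ fwdDev μ X := le_csSup hb ⟨t, ht, rfl⟩
  have hlog : log (mgf X μ t) ≤ fwdDev μ X ^ 2 * t ^ 2 / 2 := by
    have := (sqrt_le_left (fwdDev_nonneg hb)).mp hsqrt
    field_simp at this ⊢
    linarith
  rcases mgf_nonneg.eq_or_lt with hzero | hpos
  · -- the junk case: `mgf X μ t = 0` when `exp (t * X)` is not integrable
    rw [← hzero]
    positivity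
  · exact (log_le_iff_le_exp hpos).mp hlog

lemma mgf_const_mul_le_of_fwdDev_le [IsProbabilityMeasure μ] (hb : BddAbove (fwdDevSet μ X))
    {c t v : ℝ} (hc : 0 ≤ c) (ht : 0 ≤ t) (hv : c * fwdDev μ X ≤ v) :
    mgf (fun ω => c * X ω) μ t ≤ exp (v ^ 2 * t ^ 2 / 2) := by
  rw [mgf_const_mul]
  rcases (mul_nonneg hc ht).eq_or_lt with hzero | hpos
  · rw [← hzero, mgf_zero]
    exact one_le_exp (by positivity)
  · have hsq : (c * fwdDev μ X) ^ 2 ≤ v ^ 2 :=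
      pow_le_pow_left₀ (mul_nonneg hc (fwdDev_nonneg hb)) hv 2
    calc mgf X μ (c * t) ≤ exp (fwdDev μ X ^ 2 * (c * t) ^ 2 / 2) := mgf_le_exp_fwdDev hb hpos
      _ = exp ((c * fwdDev μ X) ^ 2 * t ^ 2 / 2) := by ring_nf
      _ ≤ exp (v ^ 2 * t ^ 2 / 2) := by gcongr

lemma hasUpperSubgaussianMGF_const_mul [IsProbabilityMeasure μ]
    (hint : ∀ θ, Integrable (fun ω => exp (θ * X ω)) μ)
    (hf : BddAbove (fwdDevSet μ X)) (hb : BddAbove (fwdDevSet μ (fun ω => -X ω))) (a : ℝ) :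
    HasUpperSubgaussianMGF (fun ω => a * X ω)
      (max (a * fwdDev μ X) (-a * fwdDev μ (fun ω => -X ω)) ^ 2) μ := by
  intro t ht
  refine ⟨by simpa only [mul_assoc] using hint (t * a), ?_⟩
  rcases le_or_gt 0 a with ha | ha
  · exact mgf_const_mul_le_of_fwdDev_le hf ha ht (le_max_left _ _)
  · have hneg : (fun ω => a * X ω) = fun ω => -a * -X ω := by
      ext ω
      ring
    rw [hneg]
    exact mgf_const_mul_le_of_fwdDev_le hb (neg_nonneg.mpr ha.le) ht (le_max_right _ _)

end

theorem stmt_5_general {Ω : Type*} [MeasurableSpace Ω] (μ : Measure Ω) [IsProbabilityMeasure μ]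
    (n : ℕ) (X : Fin n → Ω → ℝ) (hX : ∀ j, Measurable (X j))
    (hindep : iIndepFun X μ)
    (hint : ∀ j, ∀ θ : ℝ, Integrable (fun ω => Real.exp (θ * X j ω)) μ)
    (hfin_f : ∀ j, BddAbove (fwdDevSet μ (X j)))
    (hfin_b : ∀ j, BddAbove (fwdDevSet μ (fun ω => -X j ω)))
    (a u : Fin n → ℝ)
    (hu : ∀ j, u j = max (a j * fwdDev μ (X j)) (-a j * fwdDev μ (fun ω => -X j ω)))
    (hupos : 0 < Real.sqrt (∑ j, u j ^ 2))
    (Om : ℝ) (hOm : 0 < Om) :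
    μ {ω | Om * Real.sqrt (∑ j, u j ^ 2) < ∑ j, a j * X j ω} ≤
      ENNReal.ofReal (Real.exp (-Om ^ 2 / 2)) := by
  set c := ∑ j, u j ^ 2
  have hc : 0 < c := sqrt_pos.mp hupos
  have hsum : HasUpperSubgaussianMGF (∑ j, fun ω => a j * X j ω) c μ :=
    HasUpperSubgaussianMGF.sum_of_iIndepFun
      (hindep.comp _ fun j => measurable_const_mul (a j)) (fun j => (hX j).const_mul (a j))
      fun j _ => hu j ▸ hasUpperSubgaussianMGF_const_mul (hint j) (hfin_f j) (hfin_b j) (a j)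
  have htail := hsum.measureReal_ge_le hc (mul_nonneg hOm.le hupos.le)
  rw [mul_pow, sq_sqrt hc.le, neg_div, mul_div_mul_right _ _ hc.ne', ← neg_div] at htail
  calc μ {ω | Om * √c < ∑ j, a j * X j ω}
      ≤ μ {ω | Om * √c ≤ (∑ j, fun ω => a j * X j ω) ω} := measure_mono fun ω hω => by
        simpa only [Set.mem_ofPred_eq, Finset.sum_apply] using hω.le
    _ = ENNReal.ofReal (μ.real {ω | Om * √c ≤ (∑ j, fun ω => a j * X j ω) ω}) :=
        (ofReal_measureReal).symm
    _ ≤ ENNReal.ofReal (exp (-Om ^ 2 / 2)) := ENNReal.ofReal_le_ofReal htail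

/-- For independent mean-zero random variables `X₁,…,Xₙ` with finite forward and backward
deviations, and `uⱼ = max(aⱼ σ_f(Xⱼ), −aⱼ σ_b(Xⱼ))` with `‖u‖₂ > 0`,
`Pr(Σⱼ aⱼ Xⱼ > Ω‖u‖₂) ≤ exp(−Ω²/2)` for every `Ω > 0`. -/
theorem stmt_5 {Ω : Type*} [MeasurableSpace Ω] (μ : Measure Ω) [IsProbabilityMeasure μ]
    (n : ℕ) (X : Fin n → Ω → ℝ) (hX : ∀ j, Measurable (X j))
    (hindep : iIndepFun X μ)
    (hmean : ∀ j, ∫ ω, X j ω ∂μ = 0)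
    (hint : ∀ j, ∀ θ : ℝ, Integrable (fun ω => Real.exp (θ * X j ω)) μ)
    (hfin_f : ∀ j, BddAbove (fwdDevSet μ (X j)))
    (hfin_b : ∀ j, BddAbove (fwdDevSet μ (fun ω => -X j ω)))
    (a u : Fin n → ℝ)
    (hu : ∀ j, u j = max (a j * fwdDev μ (X j)) (-a j * fwdDev μ (fun ω => -X j ω)))
    (hupos : 0 < Real.sqrt (∑ j, u j ^ 2))
    (Om : ℝ) (hOm : 0 < Om) :
    μ {ω | Om * Real.sqrt (∑ j, u j ^ 2) < ∑ j, a j * X j ω} ≤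
      ENNReal.ofReal (Real.exp (-Om ^ 2 / 2)) :=
  stmt_5_general μ n X hX hindep hint hfin_f hfin_b a u hu hupos Om hOm
end

section
/- Let 0 < η_c ≤ 1, 0 < η_d ≤ 1, and let P_min ≤ 0 ≤ P_max be real power limits. Let (E_min,k)_{k≥0} and (E_max,k)_{k≥0} be real sequences with E_min,k+1 ≤ E_min,k ≤ E_max,k ≤ E_max,k+1 for all k, and let E₀ satisfy E_min,0 ≤ E₀ ≤ E_max,0. Let (p_k)_{k≥0} be an arbitrary sequence of desired powers, and define the clamped powers and energies recursively by: if p_k < 0 then P_k := max(p_k, P_min, η_d·(E_min,k+1 − E_k)), otherwise P_k := min(p_k, P_max, (E_max,k+1 − E_k)/η_c); and E_{k+1} := E_k + η_c·max(P_k,0) − (1/η_d)·max(−P_k,0). Then for all k: P_min ≤ P_k ≤ P_max and E_min,k ≤ E_k ≤ E_max,k. -/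
/-- Safety of the rule-based peak-shaving controller (Algorithm 1): the clamping in the
discharge step (`max` of desired power, power lower limit and energy-derived limit) and in
the charge step (`min` of desired power, power upper limit and energy-derived limit)
guarantees that the battery power stays in `[P_min, P_max]` and the energy content stays
within the time-varying boundaries `[E_min,k, E_max,k]` (time step normalised to `Δt = 1`). -/
theorem stmt_12 (ηc ηd : ℝ) (hc0 : 0 < ηc) (hc1 : ηc ≤ 1) (hd0 : 0 < ηd) (hd1 : ηd ≤ 1)
    (Pmin Pmax : ℝ) (hPmin : Pmin ≤ 0) (hPmax : 0 ≤ Pmax)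
    (Emin Emax : ℕ → ℝ)
    (hbnd : ∀ k, Emin (k + 1) ≤ Emin k ∧ Emin k ≤ Emax k ∧ Emax k ≤ Emax (k + 1))
    (p : ℕ → ℝ) (P E : ℕ → ℝ)
    (hE0 : Emin 0 ≤ E 0 ∧ E 0 ≤ Emax 0)
    (hP : ∀ k, P k = if p k < 0
        then max (p k) (max Pmin (ηd * (Emin (k + 1) - E k)))
        else min (p k) (min Pmax ((Emax (k + 1) - E k) / ηc)))
    (hE : ∀ k, E (k + 1) = E k + ηc * max (P k) 0 - (1 / ηd) * max (-P k) 0) :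
    ∀ k, (Pmin ≤ P k ∧ P k ≤ Pmax) ∧ (Emin k ≤ E k ∧ E k ≤ Emax k) := by
  have key : ∀ k, (Emin k ≤ E k ∧ E k ≤ Emax k) →
      ((Pmin ≤ P k ∧ P k ≤ Pmax) ∧ (Emin (k+1) ≤ E (k+1) ∧ E (k+1) ≤ Emax (k+1))) := by
    intro k ⟨hEl, hEu⟩
    obtain ⟨hb1, hb2, hb3⟩ := hbnd k
    by_cases hp : p k < 0
    · have hPk : P k = max (p k) (max Pmin (ηd * (Emin (k + 1) - E k))) := by
        rw [hP k, if_pos hp]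
      have h3 : ηd * (Emin (k+1) - E k) ≤ 0 := by nlinarith
      have hPle : P k ≤ 0 := by rw [hPk]; simp [hp.le, hPmin, h3]
      have hQge : ηd * (Emin (k+1) - E k) ≤ P k := by
        rw [hPk]; exact le_max_of_le_right (le_max_right _ _)
      have hQgeP : Pmin ≤ P k := by
        rw [hPk]; exact le_max_of_le_right (le_max_left _ _)
      have hEnext : E (k+1) = E k + (1/ηd) * P k := by
        rw [hE k, max_eq_right hPle, max_eq_left (by linarith : 0 ≤ -P k)]; ring
      refine ⟨⟨hQgeP, le_trans hPle hPmax⟩, ?_, ?_⟩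
      · rw [hEnext]
        have : Emin (k+1) - E k ≤ (1/ηd) * P k := by
          rw [one_div, ← div_eq_inv_mul, le_div_iff₀ hd0]
          nlinarith
        linarith
      · rw [hEnext]
        have : (1/ηd) * P k ≤ 0 := by
          apply mul_nonpos_of_nonneg_of_nonpos (by positivity) hPle
        linarith
    · have hPk : P k = min (p k) (min Pmax ((Emax (k + 1) - E k) / ηc)) := by
        rw [hP k, if_neg hp]
      push_neg at hp
      have h3 : 0 ≤ (Emax (k+1) - E k) / ηc := by
        apply div_nonneg (by linarith) hc0.le
      have hPge : 0 ≤ P k := by rw [hPk]; simp [hp, hPmax, h3]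
      have hQle : P k ≤ (Emax (k+1) - E k) / ηc := by
        rw [hPk]; exact min_le_of_right_le (min_le_right _ _)
      have hQleP : P k ≤ Pmax := by
        rw [hPk]; exact min_le_of_right_le (min_le_left _ _)
      have hEnext : E (k+1) = E k + ηc * P k := by
        rw [hE k, max_eq_left hPge, max_eq_right (by linarith : -P k ≤ 0)]; ring
      refine ⟨⟨le_trans hPmin hPge, hQleP⟩, ?_, ?_⟩
      · rw [hEnext]; nlinarith
      · rw [hEnext]
        have := (le_div_iff₀ hc0).mp hQle
        linarith
  intro k
  induction k with
  | zero => exact ⟨(key 0 hE0).1, hE0⟩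
  | succ n ih => exact ⟨(key (n+1) (key n ih.2).2).1, (key n ih.2).2⟩
end
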